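/- arXiv:2103.02890 — 2 statements merged into one kernel-verified Lean document; each statement's English description precedes it below -/
import Mathlib

section
/- Let s > 0 and let μ be a finite positive Borel measure on the open unit ball B_n of ℂ^n such that μ(B_δ(ζ)) ≤ C δ^{ns} for all ζ on the unit sphere and all δ > 0, where B_δ(ζ) = {z ∈ B_n : |1 - ⟨z,ζ⟩| < δ}. Then for every t > 0 there is a constant C' such that sup_{a ∈ B_n} ∫_{B_n} (1-|a|²)^t / |1 - ⟨a,z⟩|^{ns+t} dμ(z) ≤ C'. -/
open MeasureTheory
open scoped ENNReal

/-- The Euclidean norm on `ℂⁿ`. -/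
noncomputable def eNorm {n : ℕ} (z : Fin n → ℂ) : ℝ :=
  Real.sqrt (∑ i, ‖z i‖ ^ 2)

/-- The standard Hermitian inner product `⟨z,w⟩ = ∑ z_j conj(w_j)` on `ℂⁿ`. -/
noncomputable def hInner {n : ℕ} (z w : Fin n → ℂ) : ℂ :=
  ∑ i, z i * (starRingEnd ℂ) (w i)

/-!
Put `r = 1 - |a|²` and let `ζ` be the unit vector in the direction of `a`. For `z` in the ball,
both `r` and `|1 - ⟨z,ζ⟩|` are at most `d(z) = 2|1 - ⟨a,z⟩|`. On the dyadic shell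
`2ᵏ r ≤ d(z) < 2ᵏ⁺¹ r` the integrand is `≲ r^t (2ᵏ r)^{-(ns+t)}`, and the shell lies in
`B_{2ᵏ⁺¹ r}(ζ)`, of measure `≲ (2ᵏ⁺¹ r)^{ns}`. So the shell contributes `≲ 2^{-kt}`, independently
of `a`, and the geometric series converges because `t > 0`.
-/

section InnerProductSpace

variable {𝕜 E : Type*} [RCLike 𝕜] [NormedAddCommGroup E] [InnerProductSpace 𝕜 E]

theorem norm_one_sub_inner_comm (x y : E) : ‖1 - inner 𝕜 x y‖ = ‖1 - inner 𝕜 y x‖ := by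
  rw [← inner_conj_symm, ← RCLike.norm_conj, map_sub, map_one, RCLike.conj_conj]

theorem one_sub_norm_le_norm_one_sub_inner (a : E) {z : E} (hz : ‖z‖ ≤ 1) :
    1 - ‖a‖ ≤ ‖1 - inner 𝕜 a z‖ := by
  have hinner : ‖inner 𝕜 a z‖ ≤ ‖a‖ :=
    (norm_inner_le_norm a z).trans (mul_le_of_le_one_right (norm_nonneg a) hz)
  have hsub := norm_sub_norm_le (1 : 𝕜) (inner 𝕜 a z)
  rw [norm_one] at hsub
  linarith

theorem exists_norm_eq_one_smul_eq [Nontrivial E] (a : E) :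
    ∃ ζ : E, ‖ζ‖ = 1 ∧ (‖a‖ : 𝕜) • ζ = a := by
  rcases eq_or_ne a 0 with rfl | ha
  · obtain ⟨x, hx⟩ := exists_ne (0 : E)
    exact ⟨(‖x‖ : 𝕜)⁻¹ • x, norm_smul_inv_norm hx, by simp⟩
  · refine ⟨(‖a‖ : 𝕜)⁻¹ • a, norm_smul_inv_norm ha, ?_⟩
    rw [smul_smul, mul_inv_cancel₀ (by simpa using ha), one_smul]

theorem norm_one_sub_inner_le_of_smul_eq {a ζ z : E} (ha : ‖a‖ ≤ 1) (hζ : ‖ζ‖ = 1)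
    (haζ : (‖a‖ : 𝕜) • ζ = a) (hz : ‖z‖ ≤ 1) :
    ‖1 - inner 𝕜 ζ z‖ ≤ ‖1 - inner 𝕜 a z‖ + (1 - ‖a‖) := by
  have hinner : ‖inner 𝕜 ζ z‖ ≤ 1 := by
    simpa [hζ] using (norm_inner_le_norm ζ z).trans (by rw [hζ, one_mul]; exact hz)
  have hsplit : 1 - inner 𝕜 ζ z = (1 - inner 𝕜 a z) + ((1 - ‖a‖ : ℝ) : 𝕜) * -inner 𝕜 ζ z := by
    have : inner 𝕜 a z = ‖a‖ * inner 𝕜 ζ z := by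
      conv_lhs => rw [← haζ]
      rw [inner_smul_left, RCLike.conj_ofReal]
    rw [this]
    push_cast
    ring
  calc ‖1 - inner 𝕜 ζ z‖
      ≤ ‖1 - inner 𝕜 a z‖ + (1 - ‖a‖) * ‖inner 𝕜 ζ z‖ := by
        rw [hsplit]
        refine (norm_add_le _ _).trans_eq ?_
        rw [norm_mul, norm_neg, RCLike.norm_ofReal, abs_of_nonneg (sub_nonneg.2 ha)]
    _ ≤ ‖1 - inner 𝕜 a z‖ + (1 - ‖a‖) :=
        add_le_add_right (mul_le_of_le_one_right (sub_nonneg.2 ha) hinner) _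

end InnerProductSpace

theorem lintegral_ofReal_rpow_div_rpow_le {X : Type*} [MeasurableSpace X] (ν : Measure X)
    {ρ d : X → ℝ} (hρ : Measurable ρ) {C p t r : ℝ} (hC : 0 ≤ C) (hp : 0 ≤ p) (ht : 0 < t)
    (hr : 0 < r) (hν : ∀ δ > 0, ν {x | ρ x < δ} ≤ ENNReal.ofReal (C * δ ^ p))
    (hrd : ∀ᵐ x ∂ν, r ≤ d x) (hρd : ∀ᵐ x ∂ν, ρ x ≤ d x) :
    ∫⁻ x, ENNReal.ofReal (r ^ t / d x ^ (p + t)) ∂ν ≤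
      ENNReal.ofReal (C * 2 ^ p / (1 - 2 ^ (-t))) := by
  set q : ℝ := 2 ^ (-t)
  have hq0 : 0 ≤ q := by positivity
  have hq1 : q < 1 := Real.rpow_lt_one_of_one_lt_of_neg one_lt_two (neg_lt_zero.mpr ht)
  set A : ℕ → Set X := fun k => {x | ρ x < 2 ^ (k + 1) * r}
  set b : ℕ → ℝ := fun k => r ^ t / (2 ^ k * r) ^ (p + t)
  have hA : ∀ k, MeasurableSet (A k) := fun k => measurableSet_lt hρ measurable_const
  have hb : ∀ k, b k * (C * (2 ^ (k + 1) * r) ^ p) = C * 2 ^ p * q ^ k := by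
    intro k
    have hu : 0 < (2 : ℝ) ^ k * r := by positivity
    have hrk : r = 2 ^ k * r * ((2 : ℝ) ^ k)⁻¹ := by field_simp
    have hqk : q ^ k = (((2 : ℝ) ^ k)⁻¹) ^ t := by
      rw [Real.inv_rpow (by positivity), ← Real.rpow_neg (by positivity),
        ← Real.rpow_natCast_mul zero_le_two, ← Real.rpow_mul_natCast zero_le_two, mul_comm]
    rw [show (2 : ℝ) ^ (k + 1) * r = 2 ^ k * r * 2 by ring, Real.mul_rpow hu.le zero_le_two,
      hqk]
    simp only [b]
    rw [Real.rpow_add hu]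
    conv_lhs => rw [hrk, Real.mul_rpow hu.le (by positivity)]
    field_simp
  have hpoint : ∀ᵐ x ∂ν, ENNReal.ofReal (r ^ t / d x ^ (p + t)) ≤
      ∑' k, (A k).indicator (fun _ => ENNReal.ofReal (b k)) x := by
    filter_upwards [hrd, hρd] with x hrx hρx
    obtain ⟨k, hk, hk'⟩ := exists_nat_pow_near ((one_le_div hr).2 hrx) one_lt_two
    rw [le_div_iff₀ hr] at hk
    rw [div_lt_iff₀ hr] at hk'
    refine le_trans ?_ (ENNReal.le_tsum k)
    rw [Set.indicator_of_mem (show x ∈ A k from hρx.trans_lt hk')]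
    exact ENNReal.ofReal_le_ofReal (div_le_div_of_nonneg_left (by positivity) (by positivity)
      (Real.rpow_le_rpow (by positivity) hk (by positivity)))
  calc ∫⁻ x, ENNReal.ofReal (r ^ t / d x ^ (p + t)) ∂ν
      ≤ ∫⁻ x, ∑' k, (A k).indicator (fun _ => ENNReal.ofReal (b k)) x ∂ν :=
        lintegral_mono_ae hpoint
    _ = ∑' k, ENNReal.ofReal (b k) * ν (A k) := by
        rw [lintegral_tsum fun k => (measurable_const.indicator (hA k)).aemeasurable]
        exact tsum_congr fun k => lintegral_indicator_const (hA k) _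
    _ ≤ ∑' k, ENNReal.ofReal (b k) * ENNReal.ofReal (C * (2 ^ (k + 1) * r) ^ p) := by
        gcongr with k
        exact hν _ (by positivity)
    _ = ∑' k, ENNReal.ofReal (C * 2 ^ p * q ^ k) := by
        refine tsum_congr fun k => ?_
        rw [← ENNReal.ofReal_mul (by positivity), hb]
    _ = ENNReal.ofReal (C * 2 ^ p / (1 - q)) := by
        rw [← ENNReal.ofReal_tsum_of_nonneg (fun k => by positivity)
          ((summable_geometric_of_lt_one hq0 hq1).mul_left _), tsum_mul_left,
          tsum_geometric_of_lt_one hq0 hq1, div_eq_mul_inv]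

section ComplexEuclidean

variable {n : ℕ}

theorem eNorm_eq_norm (z : Fin n → ℂ) : eNorm z = ‖WithLp.toLp 2 z‖ := by
  simp [EuclideanSpace.norm_eq, eNorm]

theorem eNorm_nonneg (z : Fin n → ℂ) : 0 ≤ eNorm z := Real.sqrt_nonneg _

theorem hInner_eq_inner (z w : Fin n → ℂ) :
    hInner z w = inner ℂ (WithLp.toLp 2 w) (WithLp.toLp 2 z) := by
  simp [PiLp.inner_apply, hInner]

theorem continuous_eNorm : Continuous (eNorm (n := n)) := by
  unfold eNorm
  fun_prop

theorem continuous_hInner_left (w : Fin n → ℂ) : Continuous fun z => hInner z w := by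
  unfold hInner
  fun_prop

theorem one_sub_eNorm_sq_le {a z : Fin n → ℂ} (ha : eNorm a ≤ 1) (hz : eNorm z ≤ 1) :
    1 - eNorm a ^ 2 ≤ 2 * ‖1 - hInner a z‖ := by
  rw [eNorm_eq_norm] at ha hz ⊢
  have hlow := one_sub_norm_le_norm_one_sub_inner (𝕜 := ℂ) (WithLp.toLp 2 a) hz
  rw [hInner_eq_inner, norm_one_sub_inner_comm]
  nlinarith [norm_nonneg (WithLp.toLp 2 a)]

theorem exists_eNorm_eq_one_norm_one_sub_hInner_le (hn : 0 < n) {a : Fin n → ℂ}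
    (ha : eNorm a ≤ 1) :
    ∃ ζ : Fin n → ℂ, eNorm ζ = 1 ∧
      ∀ z, eNorm z ≤ 1 → ‖1 - hInner z ζ‖ ≤ 2 * ‖1 - hInner a z‖ := by
  have : Nonempty (Fin n) := ⟨⟨0, hn⟩⟩
  rw [eNorm_eq_norm] at ha
  obtain ⟨ζ, hζ, haζ⟩ := exists_norm_eq_one_smul_eq (𝕜 := ℂ) (WithLp.toLp 2 a)
  refine ⟨WithLp.ofLp ζ, by simpa [eNorm_eq_norm] using hζ, fun z hz => ?_⟩
  rw [eNorm_eq_norm] at hz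
  have hup := norm_one_sub_inner_le_of_smul_eq ha hζ haζ hz
  have hlow := one_sub_norm_le_norm_one_sub_inner (𝕜 := ℂ) (WithLp.toLp 2 a) hz
  rw [hInner_eq_inner, hInner_eq_inner, norm_one_sub_inner_comm (WithLp.toLp 2 z)]
  simp only [WithLp.toLp_ofLp]
  linarith

end ComplexEuclidean

theorem stmt0_general (n : ℕ) (hn : 0 < n) (s : ℝ) (hs : 0 < s)
    (μ : Measure (Fin n → ℂ))
    (C : ℝ) (hC : 0 < C)
    (hCar : ∀ ζ : Fin n → ℂ, eNorm ζ = 1 → ∀ δ : ℝ, 0 < δ →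
      μ {z | eNorm z < 1 ∧ ‖1 - hInner z ζ‖ < δ} ≤
        ENNReal.ofReal (C * δ ^ ((n : ℝ) * s))) :
    ∀ t : ℝ, 0 < t → ∃ C' : ℝ, 0 < C' ∧
      ∀ a : Fin n → ℂ, eNorm a < 1 →
        ∫⁻ z in {z : Fin n → ℂ | eNorm z < 1},
            ENNReal.ofReal ((1 - eNorm a ^ 2) ^ t /
              ‖1 - hInner a z‖ ^ ((n : ℝ) * s + t)) ∂μ
          ≤ ENNReal.ofReal C' := by
  intro t ht
  set p : ℝ := n * s
  have hp : 0 ≤ p := by positivity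
  have hq : (0 : ℝ) < 1 - 2 ^ (-t) :=
    sub_pos.2 (Real.rpow_lt_one_of_one_lt_of_neg one_lt_two (neg_lt_zero.2 ht))
  refine ⟨2 ^ (p + t) * (C * 2 ^ p / (1 - 2 ^ (-t))), by positivity, fun a ha => ?_⟩
  set B : Set (Fin n → ℂ) := {z | eNorm z < 1}
  have hB : MeasurableSet B := measurableSet_lt continuous_eNorm.measurable measurable_const
  obtain ⟨ζ, hζ, hζa⟩ := exists_eNorm_eq_one_norm_one_sub_hInner_le hn ha.le
  have hρ : Measurable fun z => ‖1 - hInner z ζ‖ := by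
    have := continuous_hInner_left ζ
    fun_prop
  have hν : ∀ δ > 0, μ.restrict B {z | ‖1 - hInner z ζ‖ < δ} ≤ ENNReal.ofReal (C * δ ^ p) := by
    intro δ hδ
    rw [Measure.restrict_apply (measurableSet_lt hρ measurable_const), Set.inter_comm]
    exact hCar ζ hζ δ hδ
  have hbound := lintegral_ofReal_rpow_div_rpow_le (μ.restrict B) hρ hC.le hp ht
    (r := 1 - eNorm a ^ 2) (d := fun z => 2 * ‖1 - hInner a z‖) (by nlinarith [eNorm_nonneg a]) hν
    ((ae_restrict_iff' hB).2 (.of_forall fun z hz => one_sub_eNorm_sq_le ha.le hz.le))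
    ((ae_restrict_iff' hB).2 (.of_forall fun z hz => hζa z hz.le))
  have hrescale : ∀ z, (1 - eNorm a ^ 2) ^ t / ‖1 - hInner a z‖ ^ (p + t) =
      2 ^ (p + t) * ((1 - eNorm a ^ 2) ^ t / (2 * ‖1 - hInner a z‖) ^ (p + t)) := fun z => by
    rw [Real.mul_rpow zero_le_two (norm_nonneg _), ← mul_div_assoc,
      mul_div_mul_left _ _ (by positivity)]
  calc ∫⁻ z in B, ENNReal.ofReal ((1 - eNorm a ^ 2) ^ t / ‖1 - hInner a z‖ ^ (p + t)) ∂μ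
      = ENNReal.ofReal (2 ^ (p + t)) * ∫⁻ z in B,
          ENNReal.ofReal ((1 - eNorm a ^ 2) ^ t / (2 * ‖1 - hInner a z‖) ^ (p + t)) ∂μ := by
        rw [← lintegral_const_mul' _ _ ENNReal.ofReal_ne_top]
        simp only [hrescale, ENNReal.ofReal_mul (by positivity : (0 : ℝ) ≤ 2 ^ (p + t))]
    _ ≤ ENNReal.ofReal (2 ^ (p + t)) * ENNReal.ofReal (C * 2 ^ p / (1 - 2 ^ (-t))) := by
        gcongr
    _ = _ := (ENNReal.ofReal_mul (by positivity)).symm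

/-- If `μ` is a finite positive Borel measure on the unit ball `B_n` of `ℂⁿ` with
`μ(B_δ(ζ)) ≤ C δ^{ns}` for all unit vectors `ζ` and `δ > 0`, then for every `t > 0`,
`sup_{a ∈ B_n} ∫ (1-|a|²)^t / |1-⟨a,z⟩|^{ns+t} dμ(z) < ∞`. -/
theorem stmt0 (n : ℕ) (hn : 0 < n) (s : ℝ) (hs : 0 < s)
    (μ : Measure (Fin n → ℂ)) [IsFiniteMeasure μ]
    (C : ℝ) (hC : 0 < C)
    (hCar : ∀ ζ : Fin n → ℂ, eNorm ζ = 1 → ∀ δ : ℝ, 0 < δ →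
      μ {z | eNorm z < 1 ∧ ‖1 - hInner z ζ‖ < δ} ≤
        ENNReal.ofReal (C * δ ^ ((n : ℝ) * s))) :
    ∀ t : ℝ, 0 < t → ∃ C' : ℝ, 0 < C' ∧
      ∀ a : Fin n → ℂ, eNorm a < 1 →
        ∫⁻ z in {z : Fin n → ℂ | eNorm z < 1},
            ENNReal.ofReal ((1 - eNorm a ^ 2) ^ t /
              ‖1 - hInner a z‖ ^ ((n : ℝ) * s + t)) ∂μ
          ≤ ENNReal.ofReal C' :=
  stmt0_general n hn s hs μ C hC hCar
end

section
/- Let X be a quasi-Banach space and let 0 < p, q < ∞. There exist constants depending only on p, q (and the modulus of concavity of X) such that for every finite sequence (x_k) in X, (∫_0^1 ‖Σ_k r_k(t) x_k‖_X^q dt)^{1/q} ≍ (∫_0^1 ‖Σ_k r_k(t) x_k‖_X^p dt)^{1/p}, where r_k are the Rademacher functions. -/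
/-!
The functions `r_0, …, r_{m-1}` are constant on the dyadic intervals of length `2⁻ᵐ`, so
integrating over `[0, 1]` is averaging over the `2 ^ m` sign patterns `ε`. For that average we
run Hoffmann-Jørgensen's argument, which needs only the quasi-triangle inequality. Reflecting the
signs after a stopping time gives Lévy's maximal inequality, and splitting the sum at
the first time its partial sums exceed `K u` shows that the number `N u` of patterns with
`Q (∑ ε_k x_k) > u` satisfies `N (3 K³ u) * 2 ^ m ≤ 4 * (N u) ^ 2`. By Markov's inequality
`N t ≤ 2 ^ m / 16` at `t = (16 𝔼 Q^p)^(1/p)`, so `N ((3 K³) ^ n t)` decays like `4 ^ (-2 ^ n)`,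
and summing over these levels bounds `𝔼 Q^q` by a constant times `t ^ q`.
-/

open MeasureTheory
open scoped ENNReal

/-- The Rademacher functions `r_k(t) = sign(sin(2^{k+1} π t))`. -/
noncomputable def rademacher (k : ℕ) (t : ℝ) : ℝ :=
  Real.sign (Real.sin (2 ^ (k + 1) * Real.pi * t))

open Finset
open scoped BigOperators

structure IsQuasiNorm {X : Type*} [AddCommGroup X] [Module ℝ X] (K : ℝ) (Q : X → ℝ) : Prop where
  nonneg : ∀ x, 0 ≤ Q x
  map_smul : ∀ (a : ℝ) (x : X), Q (a • x) = |a| * Q x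
  add_le : ∀ x y, Q (x + y) ≤ K * (Q x + Q y)

namespace IsQuasiNorm

variable {X : Type*} [AddCommGroup X] [Module ℝ X] {K : ℝ} {Q : X → ℝ}

lemma map_zero (hQ : IsQuasiNorm K Q) : Q 0 = 0 := by
  simpa using hQ.map_smul 0 0

lemma lt_or_lt_of_mul_lt_midpoint (hQ : IsQuasiNorm K Q) (hK : 0 ≤ K) {t : ℝ} {x y : X}
    (h : K * t < Q ((2⁻¹ : ℝ) • (x + y))) : t < Q x ∨ t < Q y := by
  by_contra! hxy
  have hmid : Q ((2⁻¹ : ℝ) • (x + y)) ≤ 2⁻¹ * (K * (Q x + Q y)) := by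
    rw [hQ.map_smul, abs_of_pos (by norm_num)]
    gcongr
    exact hQ.add_le x y
  nlinarith [mul_le_mul_of_nonneg_left (add_le_add hxy.1 hxy.2) hK]

end IsQuasiNorm

def boolSign (b : Bool) : ℝ := if b then -1 else 1

@[simp] lemma abs_boolSign (b : Bool) : |boolSign b| = 1 := by
  cases b <;> simp [boolSign]

@[simp] lemma boolSign_not (b : Bool) : boolSign (!b) = -boolSign b := by
  cases b <;> simp [boolSign]

lemma card_le_two_mul_card_filter_and {α : Type*} [Fintype α] {φ : α → α}
    (hφ : Function.Involutive φ) {A B : α → Prop} [DecidablePred A] [DecidablePred B]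
    (hA : ∀ a, A a → A (φ a)) (hB : ∀ a, A a → B a ∨ B (φ a)) :
    #{a | A a} ≤ 2 * #{a | A a ∧ B a} := by
  have hsplit := card_filter_add_card_filter_not (s := {a | A a}) B
  simp only [filter_filter] at hsplit
  have hinj : #{a | A a ∧ ¬B a} ≤ #{a | A a ∧ B a} := by
    refine card_le_card_of_injOn φ (fun a ha => ?_) hφ.injective.injOn
    simp only [coe_filter, mem_univ, true_and, Set.mem_ofPred_eq] at ha ⊢
    exact ⟨hA a ha.1, (hB a ha.1).resolve_left ha.2⟩
  omega

section SignPatterns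

variable {m : ℕ}

def splice (T : Finset (Fin m)) (u v : Fin m → Bool) : Fin m → Bool :=
  fun k => if k ∈ T then u k else v k

def flipOutside (T : Finset (Fin m)) (ε : Fin m → Bool) : Fin m → Bool :=
  splice T ε fun k => !ε k

lemma flipOutside_involutive (T : Finset (Fin m)) : Function.Involutive (flipOutside T) := by
  intro ε
  funext k
  by_cases hk : k ∈ T <;> simp [flipOutside, splice, hk]

lemma card_filter_and_mul_two_pow (T : Finset (Fin m)) {A B : (Fin m → Bool) → Prop}
    [DecidablePred A] [DecidablePred B]
    (hA : ∀ ε ε', (∀ k ∈ T, ε k = ε' k) → (A ε ↔ A ε'))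
    (hB : ∀ ε ε', (∀ k ∉ T, ε k = ε' k) → (B ε ↔ B ε')) :
    #{ε | A ε ∧ B ε} * 2 ^ m = #{ε | A ε} * #{ε | B ε} := by
  have hswap : ∀ u v : Fin m → Bool, splice T (splice T u v) (splice T v u) = u := by
    intro u v
    funext k
    by_cases hk : k ∈ T <;> simp [splice, hk]
  have hcard : #{ε | A ε} * #{ε | B ε}
      = #(({ε | A ε ∧ B ε} : Finset _) ×ˢ (univ : Finset (Fin m → Bool))) := by
    rw [← card_product]
    refine card_bij' (fun uv _ => (splice T uv.1 uv.2, splice T uv.2 uv.1))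
      (fun uv _ => (splice T uv.1 uv.2, splice T uv.2 uv.1)) ?_ ?_
      (fun _ _ => by simp [hswap]) (fun _ _ => by simp [hswap])
    all_goals
      rintro ⟨u, v⟩ huv
      simp only [mem_product, mem_filter, mem_univ, true_and, and_true] at huv ⊢
      exact ⟨(hA _ _ fun k hk => by simp [splice, hk]).1 huv.1,
        (hB _ _ fun k hk => by simp [splice, hk]).1 huv.2⟩
  rw [hcard, card_product, card_univ, Fintype.card_fun, Fintype.card_bool, Fintype.card_fin]

end SignPatterns

section SignedSums

variable {X : Type*} [AddCommGroup X] [Module ℝ X] {m : ℕ}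

def signedSumOn (x : Fin m → X) (T : Finset (Fin m)) (ε : Fin m → Bool) : X :=
  ∑ k ∈ T, boolSign (ε k) • x k

def signedSum (x : Fin m → X) (ε : Fin m → Bool) : X :=
  signedSumOn x univ ε

lemma signedSumOn_congr (x : Fin m → X) {T : Finset (Fin m)} {ε ε' : Fin m → Bool}
    (h : ∀ k ∈ T, ε k = ε' k) : signedSumOn x T ε = signedSumOn x T ε' :=
  sum_congr rfl fun k hk => by rw [h k hk]

lemma signedSumOn_add_compl (x : Fin m → X) (T : Finset (Fin m)) (ε : Fin m → Bool) :
    signedSumOn x T ε + signedSumOn x Tᶜ ε = signedSum x ε :=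
  sum_add_sum_compl T _

/-- Flipping the signs off `T` cancels exactly the terms off `T`. -/
lemma signedSumOn_eq_midpoint (x : Fin m → X) (T : Finset (Fin m)) (ε : Fin m → Bool) :
    signedSumOn x T ε = (2⁻¹ : ℝ) • (signedSum x ε + signedSum x (flipOutside T ε)) := by
  simp only [signedSum, signedSumOn]
  rw [← sum_add_distrib, smul_sum,
    ← sum_filter_add_sum_filter_not univ (· ∈ T), filter_mem_eq_inter, univ_inter]
  have hout : ∑ k ∈ univ with k ∉ T,
      (2⁻¹ : ℝ) • (boolSign (ε k) • x k + boolSign (flipOutside T ε k) • x k) = 0 :=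
    sum_eq_zero fun k hk => by
      simp [flipOutside, splice, (mem_filter.1 hk).2]
  rw [hout, add_zero]
  refine sum_congr rfl fun k hk => ?_
  simp only [flipOutside, splice, if_pos hk, ← two_smul ℝ (boolSign (ε k) • x k), smul_smul]
  congr 1
  ring

def indicesBelow (m j : ℕ) : Finset (Fin m) := {k | (k : ℕ) < j}

lemma indicesBelow_mono {i j : ℕ} (h : i ≤ j) : indicesBelow m i ⊆ indicesBelow m j :=
  fun k hk => by simp only [indicesBelow, mem_filter, mem_univ, true_and] at hk ⊢; omega

lemma signedSumOn_indicesBelow_zero (x : Fin m → X) (ε : Fin m → Bool) :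
    signedSumOn x (indicesBelow m 0) ε = 0 := by
  simp [signedSumOn, indicesBelow]

lemma signedSumOn_indicesBelow_self (x : Fin m → X) (ε : Fin m → Bool) :
    signedSumOn x (indicesBelow m m) ε = signedSum x ε := by
  simp [signedSum, indicesBelow]

lemma signedSumOn_indicesBelow_succ (x : Fin m → X) {j : ℕ} (hj : j < m) (ε : Fin m → Bool) :
    signedSumOn x (indicesBelow m (j + 1)) ε
      = signedSumOn x (indicesBelow m j) ε + boolSign (ε ⟨j, hj⟩) • x ⟨j, hj⟩ := by
  have hinsert : indicesBelow m (j + 1) = insert ⟨j, hj⟩ (indicesBelow m j) := by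
    ext k
    simp only [indicesBelow, mem_insert, mem_filter, mem_univ, true_and, Fin.ext_iff]
    omega
  rw [signedSumOn, hinsert, sum_insert (by simp [indicesBelow]), add_comm, signedSumOn]

def FirstCrossing (Q : X → ℝ) (x : Fin m → X) (t : ℝ) (j : ℕ) (ε : Fin m → Bool) : Prop :=
  j ≤ m ∧ t < Q (signedSumOn x (indicesBelow m j) ε) ∧
    ∀ i < j, Q (signedSumOn x (indicesBelow m i) ε) ≤ t

variable {Q : X → ℝ} {x : Fin m → X} {t : ℝ}

lemma firstCrossing_congr {j : ℕ} {ε ε' : Fin m → Bool}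
    (h : ∀ k ∈ indicesBelow m j, ε k = ε' k) :
    FirstCrossing Q x t j ε ↔ FirstCrossing Q x t j ε' := by
  have hsub : ∀ i ≤ j, signedSumOn x (indicesBelow m i) ε = signedSumOn x (indicesBelow m i) ε' :=
    fun i hi => signedSumOn_congr x fun k hk => h k (indicesBelow_mono hi hk)
  unfold FirstCrossing
  rw [hsub j le_rfl]
  exact and_congr_right' <| and_congr_right' <|
    forall₂_congr fun i hi => by rw [hsub i hi.le]

lemma FirstCrossing.unique {j j' : ℕ} {ε : Fin m → Bool} (h : FirstCrossing Q x t j ε)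
    (h' : FirstCrossing Q x t j' ε) : j = j' := by
  by_contra hne
  rcases lt_or_gt_of_ne hne with hlt | hlt
  · exact (h'.2.2 j hlt).not_gt h.2.1
  · exact (h.2.2 j' hlt).not_gt h'.2.1

lemma exists_firstCrossing {ε : Fin m → Bool} (h : t < Q (signedSum x ε)) :
    ∃ j, FirstCrossing Q x t j ε := by
  have hex : ∃ j, j ≤ m ∧ t < Q (signedSumOn x (indicesBelow m j) ε) :=
    ⟨m, le_rfl, by rwa [signedSumOn_indicesBelow_self]⟩
  refine ⟨Nat.find hex, (Nat.find_spec hex).1, (Nat.find_spec hex).2, fun i hi => ?_⟩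
  exact not_lt.1 fun hlt => Nat.find_min hex hi ⟨hi.le.trans (Nat.find_spec hex).1, hlt⟩

lemma FirstCrossing.map_le {K M : ℝ} (hQ : IsQuasiNorm K Q) (hK : 0 ≤ K) (ht : 0 ≤ t)
    (hx : ∀ k, Q (x k) ≤ M) {j : ℕ} {ε : Fin m → Bool} (h : FirstCrossing Q x t j ε) :
    Q (signedSumOn x (indicesBelow m j) ε) ≤ K * (t + M) := by
  obtain ⟨hjm, hcross, hbefore⟩ := h
  obtain ⟨i, rfl⟩ : ∃ i, j = i + 1 := by
    refine Nat.exists_eq_add_one.2 (Nat.pos_of_ne_zero fun hj0 => ?_)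
    rw [hj0, signedSumOn_indicesBelow_zero, hQ.map_zero] at hcross
    linarith
  rw [signedSumOn_indicesBelow_succ x (by omega)]
  calc _ ≤ K * (Q (signedSumOn x (indicesBelow m i) ε) + Q (x ⟨i, by omega⟩)) := by
        simpa only [hQ.map_smul, abs_boolSign, one_mul] using
          hQ.add_le (signedSumOn x (indicesBelow m i) ε) (boolSign (ε ⟨i, _⟩) • x ⟨i, _⟩)
    _ ≤ K * (t + M) := by gcongr; exacts [hbefore i (by omega), hx _]

end SignedSums

section Reflection

variable {X : Type*} [AddCommGroup X] [Module ℝ X] {m : ℕ} {K : ℝ} {Q : X → ℝ}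

/-- Reflection principle: the event is invariant under flipping the signs off `T`, and one of the
two reflected full sums must exceed `t`. -/
lemma card_le_two_mul_card_and_lt_signedSum (hQ : IsQuasiNorm K Q) (hK : 0 ≤ K)
    (x : Fin m → X) (T : Finset (Fin m)) {t : ℝ} {A : (Fin m → Bool) → Prop} [DecidablePred A]
    (hA : ∀ ε ε', (∀ k ∈ T, ε k = ε' k) → (A ε ↔ A ε'))
    (hlarge : ∀ ε, A ε → K * t < Q (signedSumOn x T ε)) :
    #{ε | A ε} ≤ 2 * #{ε | A ε ∧ t < Q (signedSum x ε)} :=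
  card_le_two_mul_card_filter_and (flipOutside_involutive T)
    (fun ε hε => (hA ε _ fun k hk => by simp [flipOutside, splice, hk]).1 hε)
    fun ε hε => hQ.lt_or_lt_of_mul_lt_midpoint hK <| signedSumOn_eq_midpoint x T ε ▸ hlarge ε hε

lemma card_mul_lt_signedSumOn_le (hQ : IsQuasiNorm K Q) (hK : 0 ≤ K) (x : Fin m → X)
    (T : Finset (Fin m)) (t : ℝ) :
    #{ε | K * t < Q (signedSumOn x T ε)} ≤ 2 * #{ε | t < Q (signedSum x ε)} := by
  refine (card_le_two_mul_card_and_lt_signedSum hQ hK x T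
    (fun ε ε' h => by rw [signedSumOn_congr x h]) fun _ h => h).trans ?_
  gcongr
  exact And.right

lemma map_le_of_two_mul_card_lt (hQ : IsQuasiNorm K Q) (hK : 0 ≤ K) (x : Fin m → X) {t : ℝ}
    (h : 2 * #{ε | t < Q (signedSum x ε)} < 2 ^ m) (k : Fin m) : Q (x k) ≤ K * t := by
  by_contra! hk
  have hall : #{ε | K * t < Q (signedSumOn x {k} ε)} = 2 ^ m := by
    rw [filter_true_of_mem fun ε _ => by simpa [signedSumOn, hQ.map_smul] using hk]
    simp
  have := card_mul_lt_signedSumOn_le hQ hK x {k} t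
  omega

open scoped Classical in
/-- Lévy's maximal inequality, counted over the first crossing times. -/
lemma sum_card_firstCrossing_le (hQ : IsQuasiNorm K Q) (hK : 0 ≤ K) (x : Fin m → X) (t : ℝ) :
    ∑ j ∈ range (m + 1), #{ε | FirstCrossing Q x (K * t) j ε}
      ≤ 2 * #{ε | t < Q (signedSum x ε)} := by
  have hdisj : ((range (m + 1) : Finset ℕ) : Set ℕ).PairwiseDisjoint
      fun j => ({ε | FirstCrossing Q x (K * t) j ε ∧ t < Q (signedSum x ε)} : Finset _) :=
    fun j _ j' _ hne => disjoint_filter.2 fun ε _ h h' => hne (h.1.unique h'.1)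
  calc ∑ j ∈ range (m + 1), #{ε | FirstCrossing Q x (K * t) j ε}
      ≤ ∑ j ∈ range (m + 1), 2 * #{ε | FirstCrossing Q x (K * t) j ε ∧ t < Q (signedSum x ε)} :=
        sum_le_sum fun j _ => card_le_two_mul_card_and_lt_signedSum hQ hK x (indicesBelow m j)
          (fun _ _ h => firstCrossing_congr h) fun _ h => h.2.1
    _ = 2 * #((range (m + 1)).biUnion fun j =>
          ({ε | FirstCrossing Q x (K * t) j ε ∧ t < Q (signedSum x ε)} : Finset _)) := by
        rw [card_biUnion hdisj, mul_sum]
    _ ≤ 2 * #{ε | t < Q (signedSum x ε)} := by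
        gcongr
        exact biUnion_subset.2 fun j _ => monotone_filter_right _ fun _ _ h => h.2

lemma exists_firstCrossing_and_mul_lt_tail (hQ : IsQuasiNorm K Q) (hK : 1 ≤ K)
    {x : Fin m → X} {u : ℝ} (hu : 0 ≤ u) (hx : ∀ k, Q (x k) ≤ K * u) {ε : Fin m → Bool}
    (hε : 3 * K ^ 3 * u < Q (signedSum x ε)) :
    ∃ j, FirstCrossing Q x (K * u) j ε ∧ K * u < Q (signedSumOn x (indicesBelow m j)ᶜ ε) := by
  have hK0 : 0 ≤ K := zero_le_one.trans hK
  have hKu : K * u ≤ 3 * K ^ 3 * u := by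
    gcongr; nlinarith [pow_le_pow_right₀ hK (show 1 ≤ 3 by norm_num)]
  obtain ⟨j, hj⟩ := exists_firstCrossing (hKu.trans_lt hε)
  refine ⟨j, hj, ?_⟩
  have hover := hj.map_le hQ hK0 (mul_nonneg hK0 hu) hx
  have hsplit := hQ.add_le (signedSumOn x (indicesBelow m j) ε)
    (signedSumOn x (indicesBelow m j)ᶜ ε)
  rw [signedSumOn_add_compl] at hsplit
  by_contra! htail
  have hK23 : K ^ 2 * u ≤ K ^ 3 * u := by
    gcongr; nlinarith [pow_le_pow_right₀ hK (show 2 ≤ 3 by norm_num)]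
  nlinarith [mul_le_mul_of_nonneg_left hover hK0, mul_le_mul_of_nonneg_left htail hK0]

open scoped Classical in
/-- Hoffmann-Jørgensen's inequality. Split the sum at the first time its partial sums exceed
`K u`: the remaining tail is independent of that time and must itself exceed `K u`. -/
lemma card_lt_signedSum_mul_le_sq (hQ : IsQuasiNorm K Q) (hK : 1 ≤ K) (x : Fin m → X) {u : ℝ}
    (hu : 0 ≤ u) (hx : ∀ k, Q (x k) ≤ K * u) :
    #{ε | 3 * K ^ 3 * u < Q (signedSum x ε)} * 2 ^ m
      ≤ 4 * #{ε | u < Q (signedSum x ε)} ^ 2 := by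
  set N := #{ε | u < Q (signedSum x ε)}
  have hK0 : 0 ≤ K := zero_le_one.trans hK
  let tail : ℕ → (Fin m → Bool) → Prop := fun j ε =>
    K * u < Q (signedSumOn x (indicesBelow m j)ᶜ ε)
  have hcover : ({ε | 3 * K ^ 3 * u < Q (signedSum x ε)} : Finset _) ⊆ (range (m + 1)).biUnion
      fun j => {ε | FirstCrossing Q x (K * u) j ε ∧ tail j ε} := fun ε hε => by
    obtain ⟨j, hj, htail⟩ := exists_firstCrossing_and_mul_lt_tail hQ hK hu hx (mem_filter.1 hε).2
    simp only [mem_biUnion, mem_range, mem_filter, mem_univ, true_and, tail]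
    exact ⟨j, Nat.lt_succ_of_le hj.1, hj, htail⟩
  have hindep : ∀ j, #{ε | FirstCrossing Q x (K * u) j ε ∧ tail j ε} * 2 ^ m
      = #{ε | FirstCrossing Q x (K * u) j ε} * #{ε | tail j ε} := fun j =>
    card_filter_and_mul_two_pow (indicesBelow m j) (fun _ _ h => firstCrossing_congr h)
      fun _ _ h => by simp only [tail, signedSumOn_congr x fun k hk => h k (mem_compl.1 hk)]
  calc #{ε | 3 * K ^ 3 * u < Q (signedSum x ε)} * 2 ^ m
      ≤ (∑ j ∈ range (m + 1), #{ε | FirstCrossing Q x (K * u) j ε ∧ tail j ε}) * 2 ^ m := by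
        gcongr
        exact (card_le_card hcover).trans card_biUnion_le
    _ = ∑ j ∈ range (m + 1), #{ε | FirstCrossing Q x (K * u) j ε} * #{ε | tail j ε} := by
        rw [sum_mul]
        exact sum_congr rfl fun j _ => hindep j
    _ ≤ ∑ j ∈ range (m + 1), #{ε | FirstCrossing Q x (K * u) j ε} * (2 * N) := by
        gcongr with j
        exact card_mul_lt_signedSumOn_le hQ hK0 x _ u
    _ ≤ 2 * N * (2 * N) := by
        rw [← sum_mul]
        gcongr
        exact sum_card_firstCrossing_le hQ hK0 x u
    _ = 4 * N ^ 2 := by ring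

end Reflection

lemma le_pow_two_pow_of_le_sq {f : ℕ → ℝ} (hf0 : ∀ n, 0 ≤ f n) (hf : ∀ n, f (n + 1) ≤ f n ^ 2)
    (n : ℕ) : f n ≤ f 0 ^ 2 ^ n := by
  induction n with
  | zero => simp
  | succ n ih =>
    calc f (n + 1) ≤ f n ^ 2 := hf n
      _ ≤ (f 0 ^ 2 ^ n) ^ 2 := pow_le_pow_left₀ (hf0 n) ih 2
      _ = f 0 ^ 2 ^ (n + 1) := by rw [← pow_mul, pow_succ]

lemma summable_pow_succ_mul_pow_two_pow {E r : ℝ} (hE : 0 < E) (hr0 : 0 < r) (hr1 : r < 1) :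
    Summable fun n : ℕ => E ^ (n + 1) * r ^ 2 ^ n := by
  refine summable_of_ratio_test_tendsto_lt_one zero_lt_one
    (Filter.Eventually.of_forall fun n => by positivity) ?_
  have hratio : ∀ n : ℕ, ‖E ^ (n + 1 + 1) * r ^ 2 ^ (n + 1)‖ / ‖E ^ (n + 1) * r ^ 2 ^ n‖
      = E * r ^ 2 ^ n := fun n => by
    rw [Real.norm_of_nonneg (by positivity), Real.norm_of_nonneg (by positivity), pow_succ 2,
      pow_mul]
    field_simp
    ring
  simp only [hratio]
  simpa using ((tendsto_pow_atTop_nhds_zero_of_lt_one hr0.le hr1).comp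
    (tendsto_pow_atTop_atTop_of_one_lt one_lt_two)).const_mul E

lemma rpow_le_add_sum_of_le_pow_mul {a t D q : ℝ} (ha : 0 ≤ a) (ht : 0 ≤ t) (hD : 0 ≤ D)
    (hq : 0 ≤ q) :
    ∀ N : ℕ, a ≤ D ^ N * t →
      a ^ q ≤ t ^ q + ∑ n ∈ range N, if D ^ n * t < a then (D ^ (n + 1) * t) ^ q else 0 := by
  have hterm : ∀ n, 0 ≤ if D ^ n * t < a then (D ^ (n + 1) * t) ^ q else 0 := fun n => by
    split_ifs with h
    · exact Real.rpow_nonneg (by positivity) q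
    · rfl
  intro N
  induction N with
  | zero =>
    intro haN
    simpa using Real.rpow_le_rpow ha (by simpa using haN) hq
  | succ N ih =>
    intro haN
    rw [sum_range_succ]
    by_cases hlow : a ≤ D ^ N * t
    · linarith [ih hlow, hterm N]
    · rw [if_pos (not_le.1 hlow)]
      have := Real.rpow_le_rpow ha haN hq
      linarith [Real.rpow_nonneg ht q, sum_nonneg fun n (_ : n ∈ range N) => hterm n]

lemma card_lt_mul_rpow_le_sum_rpow {α : Type*} [Fintype α] {a : α → ℝ} (ha : ∀ i, 0 ≤ a i)
    {t p : ℝ} (ht : 0 ≤ t) (hp : 0 ≤ p) : #{i | t < a i} * t ^ p ≤ ∑ i, a i ^ p := by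
  calc #{i | t < a i} * t ^ p = ∑ i with t < a i, t ^ p := by rw [sum_const, nsmul_eq_mul]
    _ ≤ ∑ i with t < a i, a i ^ p :=
        sum_le_sum fun i hi => Real.rpow_le_rpow ht (mem_filter.1 hi).2.le hp
    _ ≤ ∑ i, a i ^ p :=
        sum_le_sum_of_subset_of_nonneg (filter_subset _ _) fun i _ _ => Real.rpow_nonneg (ha i) p

lemma expect_rpow_le_of_card_lt_le {α : Type*} [Fintype α] [Nonempty α] {a : α → ℝ}
    (ha : ∀ i, 0 ≤ a i) {t D q : ℝ} (ht : 0 < t) (hD : 1 < D) (hq : 0 ≤ q) {c : ℕ → ℝ}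
    (hc0 : ∀ n, 0 ≤ c n) (hc : Summable fun n => (D ^ q) ^ (n + 1) * c n)
    (hcard : ∀ n, (#{i | D ^ n * t < a i} : ℝ) ≤ Fintype.card α * c n) :
    𝔼 i, a i ^ q ≤ t ^ q * (1 + ∑' n, (D ^ q) ^ (n + 1) * c n) := by
  obtain ⟨N, hN⟩ : ∃ N : ℕ, ∀ i, a i ≤ D ^ N * t := by
    obtain ⟨N, hN⟩ := pow_unbounded_of_one_lt ((∑ i, a i) / t) hD
    exact ⟨N, fun i => (single_le_sum (fun j _ => ha j) (mem_univ i)).trans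
      ((div_lt_iff₀ ht).1 hN).le⟩
  have hcardpos : (0 : ℝ) < Fintype.card α := by exact_mod_cast Fintype.card_pos
  have hlevel : ∀ n, (D ^ (n + 1) * t) ^ q = (D ^ q) ^ (n + 1) * t ^ q := fun n => by
    rw [Real.mul_rpow (by positivity) ht.le, Real.rpow_pow_comm (by positivity)]
  rw [Fintype.expect_eq_sum_div_card, div_le_iff₀ hcardpos]
  calc ∑ i, a i ^ q
      ≤ ∑ i, (t ^ q + ∑ n ∈ range N, if D ^ n * t < a i then (D ^ (n + 1) * t) ^ q else 0) :=
        sum_le_sum fun i _ => rpow_le_add_sum_of_le_pow_mul (ha i) ht.le (by positivity) hq N (hN i)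
    _ = Fintype.card α * t ^ q
          + ∑ n ∈ range N, #{i | D ^ n * t < a i} * (D ^ (n + 1) * t) ^ q := by
        rw [sum_add_distrib, sum_comm, sum_const, card_univ, nsmul_eq_mul]
        congr 1
        refine sum_congr rfl fun n _ => ?_
        rw [← sum_filter, sum_const, nsmul_eq_mul]
    _ ≤ Fintype.card α * t ^ q
          + ∑ n ∈ range N, Fintype.card α * t ^ q * ((D ^ q) ^ (n + 1) * c n) := by
        refine add_le_add le_rfl (sum_le_sum fun n _ => ?_)
        have hpos : 0 ≤ (D ^ q) ^ (n + 1) * t ^ q :=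
          mul_nonneg (pow_nonneg (Real.rpow_nonneg (by positivity) q) _) (Real.rpow_nonneg ht.le q)
        calc #{i | D ^ n * t < a i} * (D ^ (n + 1) * t) ^ q
            = (D ^ q) ^ (n + 1) * t ^ q * #{i | D ^ n * t < a i} := by rw [hlevel]; ring
          _ ≤ (D ^ q) ^ (n + 1) * t ^ q * (Fintype.card α * c n) := by gcongr; exact hcard n
          _ = Fintype.card α * t ^ q * ((D ^ q) ^ (n + 1) * c n) := by ring
    _ ≤ t ^ q * (1 + ∑' n, (D ^ q) ^ (n + 1) * c n) * Fintype.card α := by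
        rw [← mul_sum]
        have := hc.sum_le_tsum (range N) fun n _ =>
          mul_nonneg (pow_nonneg (Real.rpow_nonneg (zero_le_one.trans hD.le) q) _) (hc0 n)
        nlinarith [mul_le_mul_of_nonneg_left this
          (mul_nonneg hcardpos.le (Real.rpow_nonneg ht.le q))]

noncomputable def kahaneConst (p q K : ℝ) : ℝ :=
  16 ^ (q / p) * (1 + ∑' n : ℕ, ((3 * K ^ 3) ^ q) ^ (n + 1) * (1 / 4 : ℝ) ^ 2 ^ n)

lemma kahaneConst_pos {p q K : ℝ} (hK : 0 ≤ K) : 0 < kahaneConst p q K := by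
  have : 0 ≤ ∑' n : ℕ, ((3 * K ^ 3) ^ q) ^ (n + 1) * (1 / 4 : ℝ) ^ 2 ^ n :=
    tsum_nonneg fun n => by positivity
  unfold kahaneConst
  positivity

section Kahane

variable {X : Type*} [AddCommGroup X] [Module ℝ X] {m : ℕ} {K : ℝ} {Q : X → ℝ}

/-- Iterating `card_lt_signedSum_mul_le_sq` squares the normalized tail `4 N / 2 ^ m` from one
level to the next. -/
lemma card_lt_signedSum_le_of_sixteen_mul_le (hQ : IsQuasiNorm K Q) (hK : 1 ≤ K)
    (x : Fin m → X) {t : ℝ} (ht : 0 ≤ t) (h16 : 16 * #{ε | t < Q (signedSum x ε)} ≤ 2 ^ m)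
    (n : ℕ) : (#{ε | (3 * K ^ 3) ^ n * t < Q (signedSum x ε)} : ℝ) ≤ 2 ^ m * (1 / 4) ^ 2 ^ n := by
  have hK0 : 0 ≤ K := zero_le_one.trans hK
  have hD : 1 ≤ 3 * K ^ 3 := by nlinarith [one_le_pow₀ (n := 3) hK]
  have h2m : (0 : ℝ) < 2 ^ m := by positivity
  have hx : ∀ k, Q (x k) ≤ K * t :=
    map_le_of_two_mul_card_lt hQ hK0 x (by have := Nat.one_le_two_pow (n := m); omega)
  set f : ℕ → ℝ := fun n => 4 * #{ε | (3 * K ^ 3) ^ n * t < Q (signedSum x ε)} / 2 ^ m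
  have hf : ∀ n, f (n + 1) ≤ f n ^ 2 := by
    intro n
    have hxn : ∀ k, Q (x k) ≤ K * ((3 * K ^ 3) ^ n * t) := fun k =>
      (hx k).trans (by gcongr; exact le_mul_of_one_le_left ht (one_le_pow₀ hD))
    have hsq := card_lt_signedSum_mul_le_sq hQ hK x (by positivity) hxn
    rw [← mul_assoc, ← pow_succ'] at hsq
    have hsqR : (#{ε | (3 * K ^ 3) ^ (n + 1) * t < Q (signedSum x ε)} : ℝ) * 2 ^ m
        ≤ 4 * (#{ε | (3 * K ^ 3) ^ n * t < Q (signedSum x ε)} : ℝ) ^ 2 := by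
      exact_mod_cast hsq
    simp only [f]
    rw [div_pow, div_le_div_iff₀ h2m (by positivity)]
    nlinarith
  have hf0 : f 0 ≤ 1 / 4 := by
    simp only [f, pow_zero, one_mul]
    rw [div_le_iff₀ h2m]
    have : (16 * #{ε | t < Q (signedSum x ε)} : ℝ) ≤ 2 ^ m := by exact_mod_cast h16
    linarith
  have hfn := (le_pow_two_pow_of_le_sq (fun n => by positivity) hf n).trans
    (pow_le_pow_left₀ (by positivity) hf0 _)
  simp only [f] at hfn
  rw [div_le_iff₀ h2m] at hfn
  nlinarith [pow_nonneg (by norm_num : (0 : ℝ) ≤ 1 / 4) (2 ^ n)]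

theorem expect_rpow_le_kahaneConst_mul (hQ : IsQuasiNorm K Q) (hK : 1 ≤ K) {p q : ℝ}
    (hp : 0 < p) (hq : 0 < q) (x : Fin m → X) :
    𝔼 ε, Q (signedSum x ε) ^ q ≤ kahaneConst p q K * (𝔼 ε, Q (signedSum x ε) ^ p) ^ (q / p) := by
  set M := 𝔼 ε, Q (signedSum x ε) ^ p
  have hM0 : 0 ≤ M := expect_nonneg fun ε _ => Real.rpow_nonneg (hQ.nonneg _) p
  rcases hM0.eq_or_lt with hM | hM
  · have hzero : ∀ ε, Q (signedSum x ε) = 0 := fun ε => by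
      have := (Fintype.expect_eq_zero_iff_of_nonneg
        fun ε => Real.rpow_nonneg (hQ.nonneg (signedSum x ε)) p).1 hM.symm
      exact (Real.rpow_eq_zero (hQ.nonneg _) hp.ne').1 (congrFun this ε)
    simp [hzero, ← hM, Real.zero_rpow hq.ne', Real.zero_rpow (div_pos hq hp).ne']
  set t := (16 * M) ^ (1 / p) with ht_def
  have ht : 0 < t := by positivity
  have htp : t ^ p = 16 * M := by
    rw [ht_def, one_div, Real.rpow_inv_rpow (by positivity) hp.ne']
  have hcard : (Fintype.card (Fin m → Bool) : ℝ) = 2 ^ m := by simp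
  have h16 : 16 * #{ε | t < Q (signedSum x ε)} ≤ 2 ^ m := by
    have hmarkov := card_lt_mul_rpow_le_sum_rpow (fun ε => hQ.nonneg (signedSum x ε)) ht.le hp.le
    rw [htp, ← Fintype.card_mul_expect, hcard] at hmarkov
    have : (16 * #{ε | t < Q (signedSum x ε)} : ℝ) ≤ 2 ^ m :=
      le_of_mul_le_mul_right (by linarith) hM
    exact_mod_cast this
  have hD : 1 < 3 * K ^ 3 := by nlinarith [one_le_pow₀ (n := 3) hK]
  calc 𝔼 ε, Q (signedSum x ε) ^ q
      ≤ t ^ q * (1 + ∑' n : ℕ, ((3 * K ^ 3) ^ q) ^ (n + 1) * (1 / 4 : ℝ) ^ 2 ^ n) :=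
        expect_rpow_le_of_card_lt_le (fun ε => hQ.nonneg _) ht hD hq.le
          (fun n => by positivity)
          (summable_pow_succ_mul_pow_two_pow (by positivity) (by norm_num) (by norm_num))
          fun n => hcard ▸ card_lt_signedSum_le_of_sixteen_mul_le hQ hK x ht.le h16 n
    _ = kahaneConst p q K * M ^ (q / p) := by
        rw [kahaneConst, ← Real.rpow_mul (by positivity), Real.mul_rpow (by norm_num) hM0]
        ring_nf

end Kahane

section Rademacher

lemma sign_sin_pi_mul_eq_neg_one_pow {y : ℝ} {n : ℕ} (h₁ : n < y) (h₂ : y < n + 1) :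
    Real.sign (Real.sin (Real.pi * y)) = (-1) ^ n := by
  have hpos : 0 < Real.sin (Real.pi * (y - n)) :=
    Real.sin_pos_of_pos_of_lt_pi (by nlinarith [Real.pi_pos]) (by nlinarith [Real.pi_pos])
  rw [show Real.pi * y = Real.pi * (y - n) + n * Real.pi by ring, Real.sin_add_nat_mul_pi]
  rcases n.even_or_odd with hn | hn
  · rw [hn.neg_one_pow, one_mul, Real.sign_of_pos hpos]
  · rw [hn.neg_one_pow, neg_one_mul, Real.sign_of_neg (neg_lt_zero.2 hpos)]

lemma rademacher_eq_of_mem_Ioo {m k j : ℕ} (hk : k < m) {t : ℝ}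
    (ht : t ∈ Set.Ioo (j / 2 ^ m : ℝ) ((j + 1) / 2 ^ m)) :
    rademacher k t = (-1) ^ (j / 2 ^ (m - 1 - k)) := by
  set i := m - 1 - k
  set n := j / 2 ^ i
  have hm : (2 : ℝ) ^ m = 2 ^ (k + 1) * 2 ^ i := by rw [← pow_add]; congr 1; omega
  have hlow : (n : ℝ) * 2 ^ i ≤ j := by exact_mod_cast Nat.div_mul_le_self j (2 ^ i)
  have hhigh : (j : ℝ) + 1 ≤ (n + 1) * 2 ^ i := by
    exact_mod_cast (Nat.lt_div_mul_add (a := j) (Nat.two_pow_pos i)).trans_le (by ring_nf; rfl)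
  obtain ⟨ht₁, ht₂⟩ := ht
  rw [div_lt_iff₀ (by positivity), hm] at ht₁
  rw [lt_div_iff₀ (by positivity), hm] at ht₂
  rw [rademacher, show 2 ^ (k + 1) * Real.pi * t = Real.pi * (2 ^ (k + 1) * t) by ring]
  apply sign_sin_pi_mul_eq_neg_one_pow
  · exact lt_of_mul_lt_mul_right (by nlinarith) (by positivity : (0 : ℝ) ≤ 2 ^ i)
  · exact lt_of_mul_lt_mul_right (by nlinarith) (by positivity : (0 : ℝ) ≤ 2 ^ i)

/-- Binary expansion, with the most significant digit first. -/
def dyadicSigns (m : ℕ) : Fin (2 ^ m) ≃ (Fin m → Bool) :=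
  finFunctionFinEquiv.symm.trans (Equiv.arrowCongr Fin.revPerm finTwoEquiv)

lemma boolSign_dyadicSigns {m : ℕ} (j : Fin (2 ^ m)) (k : Fin m) :
    boolSign (dyadicSigns m j k) = (-1) ^ ((j : ℕ) / 2 ^ (m - 1 - k)) := by
  have hdigit : ∀ d : Fin 2, boolSign (finTwoEquiv d) = (-1) ^ (d : ℕ) := by
    intro d; fin_cases d <;> simp [boolSign, finTwoEquiv]
  rw [neg_one_pow_eq_pow_mod_two, dyadicSigns, Equiv.trans_apply, Equiv.arrowCongr_apply,
    Function.comp_apply, Function.comp_apply, hdigit, finFunctionFinEquiv_symm_apply_val,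
    Fin.revPerm_symm, Fin.revPerm_apply, Fin.val_rev, Nat.sub_sub, add_comm 1]

lemma setLIntegral_Ioc_eq_sum (f : ℝ → ℝ≥0∞) {δ : ℝ} (hδ : 0 ≤ δ) (n : ℕ) :
    ∫⁻ t in Set.Ioc 0 (n * δ), f t
      = ∑ j ∈ range n, ∫⁻ t in Set.Ioc (j * δ) ((j + 1) * δ), f t := by
  induction n with
  | zero => simp
  | succ n ih =>
    rw [sum_range_succ, ← ih, ← lintegral_union measurableSet_Ioc
      (Set.Ioc_disjoint_Ioc_of_le le_rfl), Set.Ioc_union_Ioc_eq_Ioc (by positivity)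
      (by gcongr; linarith)]
    push_cast
    rfl

theorem lintegral_rademacher (m : ℕ) (F : (Fin m → ℝ) → ℝ≥0∞) :
    ∫⁻ t in Set.Icc (0 : ℝ) 1, F (fun k => rademacher k t)
      = (2 ^ m)⁻¹ * ∑ ε : Fin m → Bool, F fun k => boolSign (ε k) := by
  set δ : ℝ := (2 ^ m)⁻¹
  have hδ : 0 < δ := by positivity
  have hpiece : ∀ j : ℕ, ∫⁻ t in Set.Ioc (j * δ) ((j + 1) * δ), F (fun k => rademacher k t)
      = F (fun k => (-1) ^ (j / 2 ^ (m - 1 - k))) * ENNReal.ofReal δ := by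
    intro j
    rw [setLIntegral_congr Ioo_ae_eq_Ioc.symm, setLIntegral_congr_fun measurableSet_Ioo
      fun t ht => congrArg F (funext fun k => rademacher_eq_of_mem_Ioo k.isLt (by
        simpa only [δ, ← div_eq_mul_inv] using ht)),
      setLIntegral_const, Real.volume_Ioo]
    congr 2
    ring
  have hofReal : ENNReal.ofReal δ = (2 ^ m)⁻¹ := by
    rw [ENNReal.ofReal_inv_of_pos (by positivity), ENNReal.ofReal_pow zero_le_two,
      ENNReal.ofReal_ofNat]
  calc ∫⁻ t in Set.Icc (0 : ℝ) 1, F (fun k => rademacher k t)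
      = ∫⁻ t in Set.Ioc 0 ((2 ^ m : ℕ) * δ), F (fun k => rademacher k t) := by
        rw [Nat.cast_pow, Nat.cast_ofNat, mul_inv_cancel₀ (by positivity)]
        exact setLIntegral_congr Ioc_ae_eq_Icc.symm
    _ = ∑ j : Fin (2 ^ m), F (fun k => boolSign (dyadicSigns m j k)) * ENNReal.ofReal δ := by
        simp only [setLIntegral_Ioc_eq_sum _ hδ.le, hpiece, boolSign_dyadicSigns]
        exact (Fin.sum_univ_eq_sum_range (fun j => F (fun k => (-1) ^ (j / 2 ^ (m - 1 - k)))
          * ENNReal.ofReal δ) _).symm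
    _ = (2 ^ m)⁻¹ * ∑ ε : Fin m → Bool, F fun k => boolSign (ε k) := by
        rw [(dyadicSigns m).sum_comp (fun ε => F (fun k => boolSign (ε k)) * ENNReal.ofReal δ),
          ← sum_mul, hofReal, mul_comm]

end Rademacher

section Moments

variable {X : Type*} [AddCommGroup X] [Module ℝ X] {m : ℕ} {K : ℝ} {Q : X → ℝ}

lemma expect_rpow_rpow_le (hQ : IsQuasiNorm K Q) (hK : 1 ≤ K) {p q : ℝ} (hp : 0 < p) (hq : 0 < q)
    (x : Fin m → X) :
    (𝔼 ε, Q (signedSum x ε) ^ q) ^ (1 / q)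
      ≤ kahaneConst p q K ^ (1 / q) * (𝔼 ε, Q (signedSum x ε) ^ p) ^ (1 / p) := by
  have hM : 0 ≤ 𝔼 ε, Q (signedSum x ε) ^ p :=
    expect_nonneg fun ε _ => Real.rpow_nonneg (hQ.nonneg _) p
  calc (𝔼 ε, Q (signedSum x ε) ^ q) ^ (1 / q)
      ≤ (kahaneConst p q K * (𝔼 ε, Q (signedSum x ε) ^ p) ^ (q / p)) ^ (1 / q) :=
        Real.rpow_le_rpow (expect_nonneg fun ε _ => Real.rpow_nonneg (hQ.nonneg _) q)
          (expect_rpow_le_kahaneConst_mul hQ hK hp hq x) (by positivity)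
    _ = kahaneConst p q K ^ (1 / q) * (𝔼 ε, Q (signedSum x ε) ^ p) ^ (1 / p) := by
        rw [Real.mul_rpow (kahaneConst_pos (by linarith)).le (by positivity),
          ← Real.rpow_mul hM, show q / p * (1 / q) = 1 / p by field_simp]

lemma setLIntegral_ofReal_rademacher_sum {g : X → ℝ} (hg : ∀ y, 0 ≤ g y) (x : Fin m → X) :
    ∫⁻ t in Set.Icc (0 : ℝ) 1, ENNReal.ofReal (g (∑ k : Fin m, rademacher k.val t • x k))
      = ENNReal.ofReal (𝔼 ε, g (signedSum x ε)) := by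
  rw [lintegral_rademacher m fun v => ENNReal.ofReal (g (∑ k, v k • x k)),
    ← ENNReal.ofReal_sum_of_nonneg fun ε _ => hg _, Fintype.expect_eq_sum_div_card,
    div_eq_inv_mul, ENNReal.ofReal_mul (by positivity), ENNReal.ofReal_inv_of_pos (by positivity)]
  simp [signedSum, signedSumOn]

end Moments

/-- Kahane's inequality: for `0 < p, q < ∞` there are constants, depending only on `p, q`
and the modulus of concavity `K` of the quasinorm, such that for every finite sequence
`(x_k)` in a quasi-normed space `X`,
`(∫₀¹ ‖∑ r_k(t) x_k‖^q dt)^{1/q} ≍ (∫₀¹ ‖∑ r_k(t) x_k‖^p dt)^{1/p}`. -/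
theorem stmt6 (p q : ℝ) (hp : 0 < p) (hq : 0 < q) (K : ℝ) (hK : 1 ≤ K) :
    ∃ c C : ℝ, 0 < c ∧ 0 < C ∧
      ∀ (X : Type) (_ : AddCommGroup X) (_ : Module ℝ X) (Q : X → ℝ),
        (∀ x, 0 ≤ Q x) →
        (∀ (a : ℝ) (x : X), Q (a • x) = |a| * Q x) →
        (∀ x y : X, Q (x + y) ≤ K * (Q x + Q y)) →
        ∀ (m : ℕ) (x : Fin m → X),
          ENNReal.ofReal c *
              (∫⁻ t in Set.Icc (0 : ℝ) 1,
                ENNReal.ofReal ((Q (∑ k : Fin m, rademacher k.val t • x k)) ^ p)) ^ (1 / p) ≤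
            (∫⁻ t in Set.Icc (0 : ℝ) 1,
                ENNReal.ofReal ((Q (∑ k : Fin m, rademacher k.val t • x k)) ^ q)) ^ (1 / q) ∧
          (∫⁻ t in Set.Icc (0 : ℝ) 1,
                ENNReal.ofReal ((Q (∑ k : Fin m, rademacher k.val t • x k)) ^ q)) ^ (1 / q) ≤
            ENNReal.ofReal C *
              (∫⁻ t in Set.Icc (0 : ℝ) 1,
                ENNReal.ofReal ((Q (∑ k : Fin m, rademacher k.val t • x k)) ^ p)) ^ (1 / p) := by
  have hCpq : 0 < kahaneConst p q K ^ (1 / q) :=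
    Real.rpow_pos_of_pos (kahaneConst_pos (by linarith)) _
  have hCqp : 0 < kahaneConst q p K ^ (1 / p) :=
    Real.rpow_pos_of_pos (kahaneConst_pos (by linarith)) _
  refine ⟨(kahaneConst q p K ^ (1 / p))⁻¹, kahaneConst p q K ^ (1 / q), inv_pos.2 hCqp, hCpq, ?_⟩
  intro X _ _ Q hQ0 hQh hQt m x
  have hQ : IsQuasiNorm K Q := ⟨hQ0, hQh, hQt⟩
  have hnonneg : ∀ r : ℝ, ∀ y, 0 ≤ Q y ^ r := fun r y => Real.rpow_nonneg (hQ0 y) r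
  rw [setLIntegral_ofReal_rademacher_sum (hnonneg p) x,
    setLIntegral_ofReal_rademacher_sum (hnonneg q) x,
    ENNReal.ofReal_rpow_of_nonneg (expect_nonneg fun ε _ => hnonneg p _) (by positivity),
    ENNReal.ofReal_rpow_of_nonneg (expect_nonneg fun ε _ => hnonneg q _) (by positivity),
    ← ENNReal.ofReal_mul (inv_pos.2 hCqp).le, ← ENNReal.ofReal_mul hCpq.le]
  refine ⟨ENNReal.ofReal_le_ofReal ?_, ENNReal.ofReal_le_ofReal (expect_rpow_rpow_le hQ hK hp hq x)⟩
  rw [inv_mul_le_iff₀ hCqp]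
  exact expect_rpow_rpow_le hQ hK hq hp x
end
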